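/- Let (A_t)_{t=0}^T, (B_t)_{t=0}^T be integer staircase sequences, t* ∈ {1,...,T} with A_{t*−1} < B_{t*}, and let (A*_t), (B*_t) be obtained by the update rule of Lemma 3 (subtracting 1 from A_t for t ≥ t_A and from B_t for t ≥ t_B, where t_A = max{t : A_t = A_{t*−1}}+1 and t_B = min{t : B_t = B_{t*}}). Then A*_t ≤ B*_t holds for all t ∈ {1,...,T} whenever A_t ≤ B_t holds for all t ∈ {1,...,T}. -/
import Mathlib


def Staircase (T : ℕ) (Z : ℕ → ℤ) : Prop :=
  Z 0 = 0 ∧ ∀ t ∈ Finset.Icc 1 T, Z (t - 1) ≤ Z t ∧ Z t ≤ Z (t - 1) + 1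

def Binary (T : ℕ) (x : ℕ → ℤ) : Prop :=
  ∀ t ∈ Finset.Icc 1 T, x t = 0 ∨ x t = 1

def Feasible (T : ℕ) (A B : ℕ → ℤ) (x : ℕ → ℤ) : Prop :=
  Binary T x ∧ ∀ t ∈ Finset.Icc 1 T,
    A t ≤ ∑ i ∈ Finset.Icc 1 t, x i ∧ ∑ i ∈ Finset.Icc 1 t, x i ≤ B t

noncomputable def cost (T : ℕ) (P : ℕ → ℝ) (x : ℕ → ℤ) : ℝ :=
  ∑ t ∈ Finset.Icc 1 T, P t * (x t : ℝ)


lemma stair_mono {T : ℕ} {Z : ℕ → ℤ} (h : Staircase T Z) :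
    ∀ {s t : ℕ}, s ≤ t → t ≤ T → Z s ≤ Z t := by
  intro s t hst htT
  induction t with
  | zero =>
    have : s = 0 := Nat.le_zero.mp hst
    simp [this]
  | succ n ih =>
    rcases eq_or_lt_of_le hst with rfl | h'
    · exact le_rfl
    · have hs : s ≤ n := Nat.lt_succ_iff.mp h'
      have hm : (n+1) ∈ Finset.Icc 1 T := Finset.mem_Icc.mpr ⟨Nat.succ_le_succ (Nat.zero_le n), htT⟩
      have h2 := (h.2 (n+1) hm).1
      calc Z s ≤ Z n := ih hs (le_trans (Nat.le_succ n) htT)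
        _ ≤ Z (n+1) := by simpa using h2

theorem stmt15 (T : ℕ) (A B : ℕ → ℤ)
    (hA : Staircase T A) (hB : Staircase T B)
    (ts : ℕ) (hts : ts ∈ Finset.Icc 1 T) (hlt : A (ts - 1) < B ts)
    (tA tB : ℕ)
    (htA : tA = sSup {t : ℕ | t ∈ Finset.Icc 1 T ∧ A t = A (ts - 1)} + 1)
    (htB : tB = sInf {t : ℕ | t ∈ Finset.Icc 1 T ∧ B t = B ts})
    (hAB : ∀ t ∈ Finset.Icc 1 T, A t ≤ B t) :
    ∀ t ∈ Finset.Icc 1 T,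
      (if t < tA then A t else A t - 1) ≤ (if t < tB then B t else B t - 1) := by
  intro t ht
  obtain ⟨ht1, htT⟩ := Finset.mem_Icc.mp ht
  obtain ⟨hts1, htsT⟩ := Finset.mem_Icc.mp hts
  -- The set for B is nonempty: ts belongs to it
  set SB : Set ℕ := {t : ℕ | t ∈ Finset.Icc 1 T ∧ B t = B ts} with hSB
  have htsSB : ts ∈ SB := ⟨hts, rfl⟩
  have htBle : tB ≤ ts := htB ▸ Nat.sInf_le htsSB
  have htBmem : tB ∈ SB := htB ▸ Nat.sInf_mem ⟨ts, htsSB⟩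
  have hBtB : B tB = B ts := htBmem.2
  by_cases hca : t < tA <;> by_cases hcb : t < tB <;>
    simp only [hca, hcb, if_true, if_false, if_pos, if_neg]
  · exact hAB t ht
  · -- t < tA, t ≥ tB : need A t ≤ B t - 1
    push_neg at hcb
    -- B t ≥ B ts
    have hBt : B ts ≤ B t := hBtB ▸ stair_mono hB hcb htT
    -- A t ≤ A (ts-1)
    set SA : Set ℕ := {t : ℕ | t ∈ Finset.Icc 1 T ∧ A t = A (ts - 1)} with hSA
    by_cases hne : SA.Nonempty
    · have hbdd : BddAbove SA := ⟨T, fun x hx => (Finset.mem_Icc.mp hx.1).2⟩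
      have hmem : sSup SA ∈ SA := Nat.sSup_mem hne hbdd
      have hle : t ≤ sSup SA := by omega
      have : A t ≤ A (sSup SA) := stair_mono hA hle (Finset.mem_Icc.mp hmem.1).2
      have hAts : A t ≤ A (ts - 1) := by rw [← hmem.2]; exact this
      omega
    · exfalso
      have : sSup SA = 0 := by
        rw [Set.not_nonempty_iff_eq_empty] at hne
        simp [hne]
      omega
  · -- t ≥ tA, t < tB : A t - 1 ≤ B t
    have := hAB t ht
    omega
  · have := hAB t ht
    omega
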